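/- Let μ, η > 0 and c ≥ 0, and define I(c) = (1/Γ(μ)) ∫₀^∞ (1 + c t^{1/η}) exp(-c t^{1/η}) t^{μ-1} e^{-t} dt. Then I(c) = 1 - c² Γ(μ + 2/η)/(2Γ(μ)) + O(c³) as c → 0⁺; in particular 1 - I(c) decays quadratically in c. -/

import Mathlib

/-!
For `x ≥ 0` the function `(1 + x) e^{-x}` equals `1 - x²/2` up to an error of at most `x³`.
Substituting `x = c t^{1/η}` and integrating against the Gamma weight `t^{m-1} e^{-t}`, the
moments `∫ t^s t^{m-1} e^{-t} dt = Γ(m + s)` turn the expansion into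
`Γ(m) I(c) = Γ(m) - c² Γ(m + 2/η) / 2 + R` with `|R| ≤ c³ Γ(m + 3/η)`.
-/

open MeasureTheory Real Filter Asymptotics Set

theorem hasDerivAt_one_add_mul_exp_neg_sub (x : ℝ) :
    HasDerivAt (fun y : ℝ => (1 + y) * exp (-y) - (1 - y ^ 2 / 2)) (x * (1 - exp (-x))) x := by
  have hexp : HasDerivAt (fun y : ℝ => exp (-y)) (-exp (-x)) x := by
    simpa using (hasDerivAt_neg x).exp
  have hpoly : HasDerivAt (fun y : ℝ => 1 - y ^ 2 / 2) (-x) x := by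
    simpa using ((hasDerivAt_pow 2 x).div_const 2).const_sub 1
  exact (((hasDerivAt_id' x).const_add 1).mul hexp |>.sub hpoly).congr_deriv (by ring)

/-- The derivative `y (1 - e^{-y})` of the difference lies in `[0, y²] ⊆ [0, x²]` on `[0, x]`. -/
theorem abs_one_add_mul_exp_neg_sub_le {x : ℝ} (hx : 0 ≤ x) :
    |(1 + x) * exp (-x) - (1 - x ^ 2 / 2)| ≤ x ^ 3 := by
  have hderiv_le : ∀ y ∈ Ico 0 x, ‖y * (1 - exp (-y))‖ ≤ x ^ 2 := by
    rintro y ⟨hy0, hyx⟩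
    have hlow : 0 ≤ 1 - exp (-y) := by simpa using exp_le_one_iff.2 (neg_nonpos.2 hy0)
    have hup : 1 - exp (-y) ≤ y := by linarith [add_one_le_exp (-y)]
    rw [norm_of_nonneg (mul_nonneg hy0 hlow)]
    nlinarith
  have := norm_image_sub_le_of_norm_deriv_le_segment'
    (fun y _ => (hasDerivAt_one_add_mul_exp_neg_sub y).hasDerivWithinAt) hderiv_le x
    (right_mem_Icc.2 hx)
  simpa [pow_succ] using this

theorem abs_integral_sub_le_of_abs_sub_le {α : Type*} [MeasurableSpace α] {μ : Measure α}
    {f g r : α → ℝ} (hf : AEStronglyMeasurable f μ) (hg : Integrable g μ) (hr : Integrable r μ)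
    (hfg : ∀ᵐ a ∂μ, |f a - g a| ≤ r a) :
    |∫ a, f a ∂μ - ∫ a, g a ∂μ| ≤ ∫ a, r a ∂μ := by
  have hdiff : Integrable (fun a => f a - g a) μ :=
    hr.mono' (hf.sub hg.aestronglyMeasurable) hfg
  have hf_int : Integrable f μ :=
    (hdiff.add hg).congr (Eventually.of_forall fun a => sub_add_cancel (f a) (g a))
  rw [← integral_sub hf_int hg]
  exact abs_integral_le_integral_abs.trans (integral_mono_ae hdiff.abs hr hfg)

theorem rpow_mul_rpow_sub_one_mul_exp_neg {t : ℝ} (ht : 0 < t) (m s : ℝ) :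
    t ^ s * (t ^ (m - 1) * exp (-t)) = exp (-t) * t ^ (m + s - 1) := by
  rw [show m + s - 1 = s + (m - 1) by ring, rpow_add ht]
  ring

theorem integrableOn_rpow_mul_rpow_sub_one_mul_exp_neg {m s : ℝ} (h : 0 < m + s) :
    IntegrableOn (fun t : ℝ => t ^ s * (t ^ (m - 1) * exp (-t))) (Ioi 0) :=
  (GammaIntegral_convergent h).congr_fun
    (fun _ ht => (rpow_mul_rpow_sub_one_mul_exp_neg ht m s).symm) measurableSet_Ioi

theorem integral_rpow_mul_rpow_sub_one_mul_exp_neg {m s : ℝ} (h : 0 < m + s) :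
    ∫ t in Ioi (0 : ℝ), t ^ s * (t ^ (m - 1) * exp (-t)) = Gamma (m + s) := by
  rw [Gamma_eq_integral h]
  exact setIntegral_congr_fun measurableSet_Ioi
    (fun _ ht => rpow_mul_rpow_sub_one_mul_exp_neg ht m s)

theorem abs_one_add_mul_exp_neg_mul_rpow_sub_le {m η c t : ℝ} (hc : 0 ≤ c) (ht : 0 < t) :
    |(1 + c * t ^ (1 / η)) * exp (-c * t ^ (1 / η)) * t ^ (m - 1) * exp (-t)
      - (t ^ (m - 1) * exp (-t) - c ^ 2 / 2 * (t ^ (2 / η) * (t ^ (m - 1) * exp (-t))))|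
      ≤ c ^ 3 * (t ^ (3 / η) * (t ^ (m - 1) * exp (-t))) := by
  have hpow (n : ℕ) : (c * t ^ (1 / η)) ^ n = c ^ n * t ^ (n / η) := by
    rw [mul_pow, ← rpow_mul_natCast ht.le]
    ring_nf
  have hsplit : (1 + c * t ^ (1 / η)) * exp (-c * t ^ (1 / η)) * t ^ (m - 1) * exp (-t)
      - (t ^ (m - 1) * exp (-t) - c ^ 2 / 2 * (t ^ (2 / η) * (t ^ (m - 1) * exp (-t))))
      = ((1 + c * t ^ (1 / η)) * exp (-(c * t ^ (1 / η))) - (1 - (c * t ^ (1 / η)) ^ 2 / 2))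
        * (t ^ (m - 1) * exp (-t)) := by
    rw [hpow 2, neg_mul, Nat.cast_ofNat]
    ring
  calc _ = |(1 + c * t ^ (1 / η)) * exp (-(c * t ^ (1 / η))) - (1 - (c * t ^ (1 / η)) ^ 2 / 2)|
        * (t ^ (m - 1) * exp (-t)) := by
          rw [hsplit, abs_mul, abs_of_nonneg (a := t ^ (m - 1) * exp (-t)) (by positivity)]
    _ ≤ (c * t ^ (1 / η)) ^ 3 * (t ^ (m - 1) * exp (-t)) := by
        gcongr
        exact abs_one_add_mul_exp_neg_sub_le (by positivity)
    _ = _ := by rw [hpow 3, Nat.cast_ofNat, mul_assoc]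

theorem abs_integral_one_add_mul_exp_neg_sub_le {m η c : ℝ} (hm : 0 < m) (hη : 0 < η)
    (hc : 0 ≤ c) :
    |(∫ t in Ioi (0 : ℝ),
        (1 + c * t ^ (1 / η)) * exp (-c * t ^ (1 / η)) * t ^ (m - 1) * exp (-t))
      - (Gamma m - c ^ 2 / 2 * Gamma (m + 2 / η))| ≤ c ^ 3 * Gamma (m + 3 / η) := by
  have hm0 : 0 < m + 0 := by simpa using hm
  have hm2 : 0 < m + 2 / η := by positivity
  have hm3 : 0 < m + 3 / η := by positivity
  have hint0 := integrableOn_rpow_mul_rpow_sub_one_mul_exp_neg hm0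
  have hmoment0 := integral_rpow_mul_rpow_sub_one_mul_exp_neg hm0
  simp only [rpow_zero, one_mul, add_zero] at hint0 hmoment0
  have hint2 := (integrableOn_rpow_mul_rpow_sub_one_mul_exp_neg hm2).const_mul (c ^ 2 / 2)
  have hint3 := (integrableOn_rpow_mul_rpow_sub_one_mul_exp_neg hm3).const_mul (c ^ 3)
  have key := abs_integral_sub_le_of_abs_sub_le (μ := volume.restrict (Ioi 0))
    (g := fun t => t ^ (m - 1) * exp (-t) - c ^ 2 / 2 * (t ^ (2 / η) * (t ^ (m - 1) * exp (-t))))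
    (by fun_prop) (Integrable.sub hint0 hint2) hint3
    ((ae_restrict_mem measurableSet_Ioi).mono
      fun t ht => abs_one_add_mul_exp_neg_mul_rpow_sub_le (m := m) (η := η) hc ht)
  rwa [integral_sub hint0 hint2, integral_const_mul, integral_const_mul, hmoment0,
    integral_rpow_mul_rpow_sub_one_mul_exp_neg hm2,
    integral_rpow_mul_rpow_sub_one_mul_exp_neg hm3] at key

/-- For `μ, η > 0` and `c ≥ 0`, the integral
`I(c) = (1/Γ(μ)) ∫₀^∞ (1 + c t^{1/η}) exp(-c t^{1/η}) t^{μ-1} e^{-t} dt` satisfies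
`I(c) = 1 - c² Γ(μ+2/η)/(2Γ(μ)) + O(c³)` as `c → 0⁺`; in particular `1 - I(c)` decays
quadratically in `c`. -/
theorem cea_zf_integral_asymptotics (m η : ℝ) (hm : 0 < m) (hη : 0 < η) :
    (fun c : ℝ =>
        (1 / Real.Gamma m)
            * (∫ t in Set.Ioi (0:ℝ),
                (1 + c * t ^ (1/η)) * Real.exp (-c * t ^ (1/η)) * t ^ (m-1) * Real.exp (-t))
          - (1 - c ^ 2 * Real.Gamma (m + 2/η) / (2 * Real.Gamma m)))
      =O[nhdsWithin 0 (Set.Ioi 0)] (fun c : ℝ => c ^ 3) := by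
  have hΓ : 0 < Gamma m := Gamma_pos_of_pos hm
  refine isBigO_iff.2 ⟨Gamma (m + 3 / η) / Gamma m, ?_⟩
  filter_upwards [self_mem_nhdsWithin] with c (hc : 0 < c)
  have hrem := abs_integral_one_add_mul_exp_neg_sub_le hm hη hc.le
  generalize ∫ t in Ioi (0 : ℝ),
    (1 + c * t ^ (1 / η)) * exp (-c * t ^ (1 / η)) * t ^ (m - 1) * exp (-t) = I at hrem ⊢
  have hnormalise : 1 / Gamma m * I - (1 - c ^ 2 * Gamma (m + 2 / η) / (2 * Gamma m))
      = (I - (Gamma m - c ^ 2 / 2 * Gamma (m + 2 / η))) / Gamma m := by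
    field_simp
  rw [norm_of_nonneg (by positivity : 0 ≤ c ^ 3), norm_eq_abs, hnormalise, abs_div,
    abs_of_pos hΓ]
  exact (div_le_div_of_nonneg_right hrem hΓ.le).trans_eq (by ring)
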